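/- Let P1 and P2 be coloured paths with colourings ω1 and ω2 from colour-set C, and let P = P1P2 be their concatenation (joining an endpoint of P1 to an endpoint of P2 by an edge), with colouring ω agreeing with ωi on Pi. Then for every colour d in C, m(P,ω,d) ≤ m(P1,ω1,d) + m(P2,ω2,d). -/

import Mathlib

/-!
Call `σ` a monotone pullback of `ν` when `σ = ν ∘ f` for a monotone map `f` between paths, i.e.
`σ` is `ν` with vertices deleted or repeated in order. Any move on `ν` is matched by at most one
move on `σ` preserving this relation: play at a vertex that `f` sends into the flooded component,
and collapse that vertex's own component onto it. A move on one half of `P₁P₂`, played on the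
concatenation, yields a monotone pullback of the colouring obtained by playing it on that half
alone. So optimal sequences for `P₁` and for `P₂`, played in turn, are matched by a sequence on
`P₁P₂` of at most their total length, ending in a pullback of the constant colouring `d`.
-/

namespace Flood

variable {V C : Type*}

/-- Two vertices are joined by an edge inside a monochromatic class. -/
def monoAdj (G : SimpleGraph V) (ω : V → C) (a b : V) : Prop :=
  G.Adj a b ∧ ω a = ω b

/-- `u` and `v` lie in a common monochromatic component of the colouring `ω`. -/
def monoLinked (G : SimpleGraph V) (ω : V → C) (u v : V) : Prop :=
  Relation.ReflTransGen (monoAdj G ω) u v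

/-- One flooding move: recolour the monochromatic component of `v` with colour `d`. -/
noncomputable def floodMove (G : SimpleGraph V) (ω : V → C) (v : V) (d : C) : V → C :=
  fun u => @ite _ (monoLinked G ω v u) (Classical.propDecidable _) d (ω u)

/-- Apply a sequence of flooding moves. -/
noncomputable def floodSeq (G : SimpleGraph V) (ω : V → C) (S : List (V × C)) : V → C :=
  S.foldl (fun ω' m => floodMove G ω' m.1 m.2) ω

/-- The sequence `S` floods `G`, i.e. makes it monochromatic. -/
def Floods (G : SimpleGraph V) (ω : V → C) (S : List (V × C)) : Prop :=
  ∀ a b, floodSeq G ω S a = floodSeq G ω S b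

/-- Minimum number of moves needed to make `G` monochromatic. -/
noncomputable def floodCost (G : SimpleGraph V) (ω : V → C) : ℕ :=
  sInf {k | ∃ S, S.length = k ∧ Floods G ω S}

/-- Minimum number of moves needed to make `G` monochromatic in colour `d`. -/
noncomputable def floodCostIn (G : SimpleGraph V) (ω : V → C) (d : C) : ℕ :=
  sInf {k | ∃ S, S.length = k ∧ ∀ a, floodSeq G ω S a = d}

/-- The sequence `S` links `u` and `v`. -/
def Links (G : SimpleGraph V) (ω : V → C) (S : List (V × C)) (u v : V) : Prop :=
  monoLinked G (floodSeq G ω S) u v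

/-- Minimum number of moves needed to link `u` and `v`. -/
noncomputable def linkCost (G : SimpleGraph V) (ω : V → C) (u v : V) : ℕ :=
  sInf {k | ∃ S, S.length = k ∧ Links G ω S u v}

/-- Minimum number of moves needed to link `u` and `v` in a monochromatic
component of colour `d`. -/
noncomputable def linkCostIn (G : SimpleGraph V) (ω : V → C) (u v : V) (d : C) : ℕ :=
  sInf {k | ∃ S, S.length = k ∧ Links G ω S u v ∧ floodSeq G ω S u = d}


end Flood

open Flood

open SimpleGraph Set

namespace Flood

variable {C : Type*}

section General

variable {V : Type*} {G : SimpleGraph V} {ω : V → C} {a b x : V}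

theorem monoLinked.symm (h : monoLinked G ω a b) : monoLinked G ω b a := by
  induction h with
  | refl => exact .refl
  | tail _ hadj ih => exact .head ⟨hadj.1.symm, hadj.2.symm⟩ ih

theorem monoLinked.trans (hab : monoLinked G ω a b) (hbx : monoLinked G ω b x) :
    monoLinked G ω a x :=
  Relation.ReflTransGen.trans hab hbx

theorem monoLinked.map {V' : Type*} {G' : SimpleGraph V'} {ω' : V' → C} {φ : V → V'}
    (hadj : ∀ {a b}, G.Adj a b → G'.Adj (φ a) (φ b)) (hcol : ∀ a, ω' (φ a) = ω a)
    (h : monoLinked G ω a b) : monoLinked G' ω' (φ a) (φ b) :=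
  Relation.ReflTransGen.lift φ (fun _ _ h => ⟨hadj h.1, by rw [hcol, hcol, h.2]⟩) _ _ h

theorem floodMove_of_monoLinked {u : V} (h : monoLinked G ω u x) (c : C) :
    floodMove G ω u c x = c :=
  if_pos h

theorem floodMove_of_not_monoLinked {u : V} (h : ¬ monoLinked G ω u x) (c : C) :
    floodMove G ω u c x = ω x :=
  if_neg h

theorem floodMove_self (u : V) (c : C) : floodMove G ω u c u = c :=
  floodMove_of_monoLinked Relation.ReflTransGen.refl c

theorem floodSeq_append (S T : List (V × C)) :
    floodSeq G ω (S ++ T) = floodSeq G (floodSeq G ω S) T :=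
  List.foldl_append ..

theorem floodSeq_map_of_eq (d : C) (L : List V) (hx : ω x = d) :
    floodSeq G ω (L.map (·, d)) x = d := by
  induction L generalizing ω with
  | nil => exact hx
  | cons v L ih =>
    refine ih (ω := floodMove G ω v d) ?_
    by_cases hl : monoLinked G ω v x
    · exact floodMove_of_monoLinked hl d
    · rwa [floodMove_of_not_monoLinked hl]

theorem floodSeq_map_of_mem (d : C) {L : List V} (hx : x ∈ L) :
    floodSeq G ω (L.map (·, d)) x = d := by
  induction L generalizing ω with
  | nil => simp at hx
  | cons v L ih =>
    rcases List.mem_cons.mp hx with rfl | hx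
    · exact floodSeq_map_of_eq d L (floodMove_self x d)
    · exact ih hx

theorem floodCostIn_le {d : C} {S : List (V × C)} (hS : ∀ a, floodSeq G ω S a = d) :
    floodCostIn G ω d ≤ S.length :=
  Nat.sInf_le ⟨S, rfl, hS⟩

theorem exists_length_eq_floodCostIn [Fintype V] (G : SimpleGraph V) (ω : V → C) (d : C) :
    ∃ S : List (V × C), S.length = floodCostIn G ω d ∧ ∀ a, floodSeq G ω S a = d :=
  Nat.sInf_mem (s := {k | ∃ S : List (V × C), S.length = k ∧ ∀ a, floodSeq G ω S a = d})
    ⟨_, _, rfl, fun _ =>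
      floodSeq_map_of_mem (L := Finset.univ.toList) d (Finset.mem_toList.mpr (Finset.mem_univ _))⟩

end General

section Path

variable {N : ℕ} {ω : Fin N → C}

theorem monoLinked_pathGraph_iff {a b : Fin N} :
    monoLinked (pathGraph N) ω a b ↔ ∀ t ∈ uIcc a b, ω t = ω a := by
  constructor
  · intro h
    induction h with
    | refl => simp
    | @tail x b _ hxb ih =>
      intro t ht
      by_cases htb : t = b
      · rw [htb, ← hxb.2]
        exact ih x right_mem_uIcc
      · refine ih t ?_
        have hadj := pathGraph_adj.mp hxb.1
        have hne := Fin.val_ne_of_ne htb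
        simp only [mem_uIcc, Fin.le_iff_val_le_val] at ht ⊢
        omega
  · intro h
    have hcol : ∀ i ∈ Ico a b ∪ Ico b a, ω i = ω (Order.succ i) := by
      rintro i (⟨hai, hib⟩ | ⟨hbi, hia⟩)
      · rw [h i (Icc_subset_uIcc ⟨hai, hib.le⟩),
          h _ (Icc_subset_uIcc ⟨hai.trans (Order.le_succ i), Order.succ_le_of_lt hib⟩)]
      · rw [h i (Icc_subset_uIcc' ⟨hbi, hia.le⟩),
          h _ (Icc_subset_uIcc' ⟨hbi.trans (Order.le_succ i), Order.succ_le_of_lt hia⟩)]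
    exact reflTransGen_of_succ _
      (fun i hi => ⟨Or.inl (Order.covBy_succ_of_not_isMax hi.2.not_isMax), hcol i (.inl hi)⟩)
      (fun i hi => ⟨Or.inr (Order.covBy_succ_of_not_isMax hi.2.not_isMax),
        (hcol i (.inr hi)).symm⟩)

theorem ordConnected_setOf_monoLinked (u : Fin N) :
    {x | monoLinked (pathGraph N) ω u x}.OrdConnected := by
  refine ⟨fun x hx y hy t ht => ?_⟩
  simp only [mem_ofPred_eq, monoLinked_pathGraph_iff] at hx hy ⊢
  intro s hs
  have : s ∈ uIcc u x ∨ s ∈ uIcc u y := by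
    simp only [mem_uIcc, mem_Icc, Fin.le_iff_val_le_val] at hs ht ⊢
    omega
  exact this.elim (hx s) (hy s)

theorem monoLinked_comp_of_monotone {M : ℕ} {f : Fin M → Fin N} (hf : Monotone f) {a b : Fin M}
    (h : monoLinked (pathGraph N) ω (f a) (f b)) : monoLinked (pathGraph M) (ω ∘ f) a b := by
  rw [monoLinked_pathGraph_iff] at h ⊢
  exact fun t ht => h (f t) (hf.mapsTo_uIcc ht)

end Path

theorem exists_monotone_collapse {α : Type*} [LinearOrder α] {s : Set α} (hs : s.OrdConnected)
    {b : α} (hb : b ∈ s) :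
    ∃ κ : α → α, Monotone κ ∧ (∀ x ∈ s, κ x = b) ∧ ∀ x ∉ s, κ x = x := by
  classical
  refine ⟨fun x => if x ∈ s then b else x, fun x y hxy => ?_, fun x hx => if_pos hx,
    fun x hx => if_neg hx⟩
  dsimp only
  split_ifs with hx hy hy
  · exact le_rfl
  · by_contra! hyb
    exact hy (hs.out hx hb ⟨hxy, hyb.le⟩)
  · by_contra! hbx
    exact hx (hs.out hb hy ⟨hbx.le, hxy⟩)
  · exact hxy

theorem exists_monotone_collapse_monoLinked {N : ℕ} (ω : Fin N → C) (u : Fin N) :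
    ∃ κ : Fin N → Fin N, Monotone κ ∧ (∀ x, monoLinked (pathGraph N) ω u x → κ x = u) ∧
      ∀ x, ¬ monoLinked (pathGraph N) ω u x → κ x = x :=
  exists_monotone_collapse (ordConnected_setOf_monoLinked u) Relation.ReflTransGen.refl

def IsMonotonePullback {M N : ℕ} (σ : Fin M → C) (ν : Fin N → C) : Prop :=
  ∃ f : Fin M → Fin N, Monotone f ∧ σ = ν ∘ f

namespace IsMonotonePullback

variable {L M N : ℕ} {σ : Fin M → C} {ν : Fin N → C}

theorem refl (σ : Fin M → C) : IsMonotonePullback σ σ :=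
  ⟨id, monotone_id, rfl⟩

theorem trans {τ : Fin L → C} (h₁ : IsMonotonePullback σ ν) (h₂ : IsMonotonePullback ν τ) :
    IsMonotonePullback σ τ := by
  obtain ⟨f, hf, rfl⟩ := h₁
  obtain ⟨g, hg, rfl⟩ := h₂
  exact ⟨g ∘ f, hg.comp hf, rfl⟩

theorem eq_of_forall_eq {d : C} (h : IsMonotonePullback σ ν) (hν : ∀ a, ν a = d) (a : Fin M) :
    σ a = d := by
  obtain ⟨f, -, rfl⟩ := h
  exact hν (f a)

theorem exists_floodMove (h : IsMonotonePullback σ ν) (u : Fin N) (c : C) :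
    ∃ T : List (Fin M × C), T.length ≤ 1 ∧
      IsMonotonePullback (floodSeq (pathGraph M) σ T) (floodMove (pathGraph N) ν u c) := by
  obtain ⟨f, hf, rfl⟩ := h
  by_cases hu : ∃ x₀, monoLinked (pathGraph N) ν u (f x₀)
  · obtain ⟨x₀, hx₀⟩ := hu
    obtain ⟨κ, hκ, hκ_in, hκ_out⟩ := exists_monotone_collapse_monoLinked (ν ∘ f) x₀
    refine ⟨[(x₀, c)], le_rfl, f ∘ κ, hf.comp hκ, funext fun x => ?_⟩
    change floodMove _ _ x₀ c x = _
    simp only [Function.comp_apply]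
    by_cases hx : monoLinked (pathGraph M) (ν ∘ f) x₀ x
    · rw [floodMove_of_monoLinked hx, hκ_in x hx, floodMove_of_monoLinked hx₀]
    · have hux : ¬ monoLinked (pathGraph N) ν u (f x) := fun h =>
        hx (monoLinked_comp_of_monotone hf (hx₀.symm.trans h))
      rw [floodMove_of_not_monoLinked hx, hκ_out x hx, floodMove_of_not_monoLinked hux]
      rfl
  · exact ⟨[], zero_le_one, f, hf,
      funext fun x => (floodMove_of_not_monoLinked (fun h => hu ⟨x, h⟩) c).symm⟩

theorem exists_floodSeq_lift {W : Type*} {H : SimpleGraph W} {ι : W → Fin N}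
    {Φ : (W → C) → Fin N → C}
    (hstep : ∀ τ w c,
      IsMonotonePullback (floodMove (pathGraph N) (Φ τ) (ι w) c) (Φ (floodMove H τ w c)))
    {τ : W → C} (h : IsMonotonePullback σ (Φ τ)) (S : List (W × C)) :
    ∃ T : List (Fin M × C), T.length ≤ S.length ∧
      IsMonotonePullback (floodSeq (pathGraph M) σ T) (Φ (floodSeq H τ S)) := by
  induction S generalizing σ τ with
  | nil => exact ⟨[], le_rfl, h⟩
  | cons move S ih =>
    obtain ⟨T₀, hT₀, h₀⟩ := h.exists_floodMove (ι move.1) move.2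
    obtain ⟨T, hT, h'⟩ := ih (h₀.trans (hstep τ move.1 move.2))
    refine ⟨T₀ ++ T, by simp only [List.length_append, List.length_cons]; omega, ?_⟩
    rwa [floodSeq_append]

end IsMonotonePullback

section Append

variable {m n : ℕ}

theorem monoLinked_append_castAdd {ω₁ : Fin m → C} (ω₂ : Fin n → C) {a b : Fin m}
    (h : monoLinked (pathGraph m) ω₁ a b) :
    monoLinked (pathGraph (m + n)) (Fin.append ω₁ ω₂) (Fin.castAdd n a) (Fin.castAdd n b) :=
  h.map (fun h => by simp only [pathGraph_adj, Fin.val_castAdd] at h ⊢; omega)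
    (Fin.append_left ω₁ ω₂)

theorem monoLinked_append_natAdd (ω₁ : Fin m → C) {ω₂ : Fin n → C} {a b : Fin n}
    (h : monoLinked (pathGraph n) ω₂ a b) :
    monoLinked (pathGraph (m + n)) (Fin.append ω₁ ω₂) (Fin.natAdd m a) (Fin.natAdd m b) :=
  h.map (fun h => by simp only [pathGraph_adj, Fin.val_natAdd] at h ⊢; omega)
    (Fin.append_right ω₁ ω₂)

/- On the concatenation, a move at `v` may also flood the part of the component of `v` lying in
the other path; collapsing the whole component onto `v` hides that excess. -/
theorem isMonotonePullback_floodMove_castAdd (ω₁ : Fin m → C) (ω₂ : Fin n → C) (v : Fin m)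
    (c : C) :
    IsMonotonePullback (floodMove (pathGraph (m + n)) (Fin.append ω₁ ω₂) (Fin.castAdd n v) c)
      (Fin.append (floodMove (pathGraph m) ω₁ v c) ω₂) := by
  obtain ⟨κ, hκ, hκ_in, hκ_out⟩ :=
    exists_monotone_collapse_monoLinked (Fin.append ω₁ ω₂) (Fin.castAdd n v)
  refine ⟨κ, hκ, funext fun x => ?_⟩
  by_cases hx : monoLinked (pathGraph (m + n)) (Fin.append ω₁ ω₂) (Fin.castAdd n v) x
  · rw [floodMove_of_monoLinked hx, Function.comp_apply, hκ_in x hx, Fin.append_left,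
      floodMove_self]
  · rw [floodMove_of_not_monoLinked hx, Function.comp_apply, hκ_out x hx]
    induction x using Fin.addCases with
    | left i =>
      rw [Fin.append_left, Fin.append_left,
        floodMove_of_not_monoLinked fun h => hx (monoLinked_append_castAdd ω₂ h)]
    | right j => rw [Fin.append_right, Fin.append_right]

theorem isMonotonePullback_floodMove_natAdd (ω₁ : Fin m → C) (ω₂ : Fin n → C) (w : Fin n)
    (c : C) :
    IsMonotonePullback (floodMove (pathGraph (m + n)) (Fin.append ω₁ ω₂) (Fin.natAdd m w) c)
      (Fin.append ω₁ (floodMove (pathGraph n) ω₂ w c)) := by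
  obtain ⟨κ, hκ, hκ_in, hκ_out⟩ :=
    exists_monotone_collapse_monoLinked (Fin.append ω₁ ω₂) (Fin.natAdd m w)
  refine ⟨κ, hκ, funext fun x => ?_⟩
  by_cases hx : monoLinked (pathGraph (m + n)) (Fin.append ω₁ ω₂) (Fin.natAdd m w) x
  · rw [floodMove_of_monoLinked hx, Function.comp_apply, hκ_in x hx, Fin.append_right,
      floodMove_self]
  · rw [floodMove_of_not_monoLinked hx, Function.comp_apply, hκ_out x hx]
    induction x using Fin.addCases with
    | left i => rw [Fin.append_left, Fin.append_left]
    | right j =>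
      rw [Fin.append_right, Fin.append_right,
        floodMove_of_not_monoLinked fun h => hx (monoLinked_append_natAdd ω₁ h)]

end Append

end Flood

/-- subadditivity under concatenation: the cost of flooding the
concatenation of two coloured paths in colour `d` is at most the sum of the
costs of flooding the two pieces in colour `d`. -/
theorem path_concat_subadditive {C : Type*} (m n : ℕ)
    (ω₁ : Fin m → C) (ω₂ : Fin n → C) (d : C) :
    floodCostIn (SimpleGraph.pathGraph (m + n)) (Fin.append ω₁ ω₂) d ≤
      floodCostIn (SimpleGraph.pathGraph m) ω₁ d +
        floodCostIn (SimpleGraph.pathGraph n) ω₂ d := by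
  obtain ⟨S₁, hlen₁, hS₁⟩ := exists_length_eq_floodCostIn (pathGraph m) ω₁ d
  obtain ⟨S₂, hlen₂, hS₂⟩ := exists_length_eq_floodCostIn (pathGraph n) ω₂ d
  obtain ⟨T₁, hT₁, h₁⟩ := (IsMonotonePullback.refl (Fin.append ω₁ ω₂)).exists_floodSeq_lift
    (isMonotonePullback_floodMove_castAdd · ω₂) S₁
  obtain ⟨T₂, hT₂, h₂⟩ := h₁.exists_floodSeq_lift
    (isMonotonePullback_floodMove_natAdd (floodSeq (pathGraph m) ω₁ S₁)) S₂
  have hT : ∀ a, floodSeq (pathGraph (m + n)) (Fin.append ω₁ ω₂) (T₁ ++ T₂) a = d := by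
    rw [floodSeq_append]
    refine h₂.eq_of_forall_eq fun a => ?_
    induction a using Fin.addCases <;> simp [hS₁, hS₂]
  calc floodCostIn (pathGraph (m + n)) (Fin.append ω₁ ω₂) d
      ≤ (T₁ ++ T₂).length := floodCostIn_le hT
    _ ≤ _ := by rw [List.length_append, ← hlen₁, ← hlen₂]; omega
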